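/- Let p > 1. There exists a constant C = C(p) such that for every measurable function F : ℝ → [0,∞) satisfying ∫_I F(ξ)^p dξ ≤ |I|^{1 − p/2} for every bounded interval I ⊂ ℝ (where |I| is the length of I), one has ∬_{ℝ×ℝ} F(ξ)^{3/2} F(η)^{3/2} |ξ − η|^{-1/2} dξ dη ≤ C ∫_ℝ F(ξ)² dξ. -/

import Mathlib

open MeasureTheory Filter Topology Complex

noncomputable section

/-- The Fourier transform `f̂(ξ) = ∫ e^{-i x ξ} f(x) dx`. -/
def FT (f : ℝ → ℂ) (ξ : ℝ) : ℂ := ∫ x : ℝ, Complex.exp (-(Complex.I * x * ξ)) * f x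

/-- The Airy evolution `e^{-t∂ₓ³} f (x) = ∫ e^{i(xξ + tξ³)} f̂(ξ) dξ`. -/
def airy (t : ℝ) (f : ℝ → ℂ) (x : ℝ) : ℂ :=
  ∫ ξ : ℝ, Complex.exp (Complex.I * (x * ξ + t * ξ ^ 3)) * FT f ξ

/-- `D^{1/6} e^{-(t-t₀)∂ₓ³} f`, viewed as a function of `(t, x) ∈ ℝ × ℝ`. -/
def airyD6shift (t₀ : ℝ) (f : ℝ → ℂ) (p : ℝ × ℝ) : ℂ :=
  ∫ ξ : ℝ, Complex.exp (Complex.I * (p.2 * ξ + (p.1 - t₀) * ξ ^ 3)) *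
    ((|ξ| ^ ((1 : ℝ)/6) : ℝ) : ℂ) * FT f ξ

/-- `D^{1/6} e^{-t∂ₓ³} f`, viewed as a function of `(t, x) ∈ ℝ × ℝ`. -/
def airyD6 (f : ℝ → ℂ) : ℝ × ℝ → ℂ := airyD6shift 0 f

/-- The Schrödinger evolution `e^{-it∂ₓ²} f`, viewed as a function of `(t,x) ∈ ℝ × ℝ`. -/
def schrod (f : ℝ → ℂ) (p : ℝ × ℝ) : ℂ :=
  ∫ ξ : ℝ, Complex.exp (Complex.I * (p.2 * ξ + p.1 * ξ ^ 2)) * FT f ξ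

/-- The transformation `g_{θ,x₀,h₀} f (x) = h₀^{-1/2} e^{iθ} f((x-x₀)/h₀)` with `θ = 0`. -/
def gT (x₀ h₀ : ℝ) (f : ℝ → ℂ) (x : ℝ) : ℂ :=
  ((h₀ ^ (-(1 : ℝ)/2) : ℝ) : ℂ) * f ((x - x₀) / h₀)

/-- Modulation `e^{i(·)a} φ`. -/
def modF (a : ℝ) (φ : ℝ → ℂ) (x : ℝ) : ℂ := Complex.exp (Complex.I * x * a) * φ x

/-- Orthogonality of two sequences of parameters `(h, ξ, x, t) ∈ (0,∞) × ℝ³`. -/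
def OrthoSeq (Γj Γk : ℕ → ℝ × ℝ × ℝ × ℝ) : Prop :=
  Tendsto (fun n => (Γj n).1 / (Γk n).1 + (Γk n).1 / (Γj n).1
      + (Γj n).1 * |(Γj n).2.1 - (Γk n).2.1|) atTop atTop
  ∨ ((∀ n, (Γj n).1 = (Γk n).1 ∧ (Γj n).2.1 = (Γk n).2.1) ∧
     Tendsto (fun n =>
       |(Γk n).2.2.2 - (Γj n).2.2.2| / (Γj n).1 ^ 3
       + 3 * |((Γk n).2.2.2 - (Γj n).2.2.2) * (Γj n).2.1| / (Γj n).1 ^ 2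
       + |(Γj n).2.2.1 - (Γk n).2.2.1
           + 3 * ((Γj n).2.2.2 - (Γk n).2.2.2) * (Γj n).2.1 ^ 2| / (Γj n).1)
       atTop atTop)

end

/-! By symmetry of the integrand it suffices to integrate over `F y ≤ F x`. Fix `x` with
`A = F x > 0` and cut the line into the dyadic annuli `ρ ≤ |x - y| < 2ρ`, `ρ = A⁻² 2ʲ`, `j ∈ ℤ`.
There the kernel is at most `ρ^(-1/2)`, and the `F^(3/2)`-mass of `{F ≤ A}` on an interval `I`
of length `4ρ` is at most `A^(3/2-q) |I|^(1-q/2)`, both for `q = 0` (trivially) and for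
`q = min p (3/2) > 1` (from the hypothesis, moved from `p` to `q` by Hölder). The first bound is
geometric as `j → -∞`, the second as `j → ∞`, and both series sum to a multiple of `A^(1/2)`.
So the inner integral is `≲ F(x)^(3/2) F(x)^(1/2) = F(x)²`. -/

open MeasureTheory Set Metric
open scoped ENNReal

def IntervalMassBound (F : ℝ → ℝ) (p : ℝ) : Prop :=
  ∀ a b : ℝ, a < b →
    ∫⁻ ζ in Ioo a b, ENNReal.ofReal (F ζ ^ p) ≤ ENNReal.ofReal ((b - a) ^ (1 - p / 2))

theorem IntervalMassBound.of_le {F : ℝ → ℝ} {p q : ℝ} (hF : Measurable F)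
    (hF0 : ∀ ζ, 0 ≤ F ζ) (hq : 0 < q) (hqp : q ≤ p) (h : IntervalMassBound F p) :
    IntervalMassBound F q := by
  intro a b hab
  have hp : 0 < p := hq.trans_le hqp
  have hL : 0 < b - a := sub_pos.2 hab
  have henorm : ∀ r : ℝ, 0 ≤ r →
      ∫⁻ ζ in Ioo a b, ‖F ζ‖ₑ ^ r = ∫⁻ ζ in Ioo a b, ENNReal.ofReal (F ζ ^ r) :=
    fun r hr ↦ lintegral_congr fun ζ ↦ by
      rw [Real.enorm_eq_ofReal (hF0 ζ), ENNReal.ofReal_rpow_of_nonneg (hF0 ζ) hr]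
  have hHolder := eLpNorm'_le_eLpNorm'_mul_rpow_measure_univ hq hqp
    (μ := volume.restrict (Ioo a b)) hF.aestronglyMeasurable
  rw [eLpNorm', eLpNorm', henorm q hq.le, henorm p hp.le, Measure.restrict_apply_univ,
    Real.volume_Ioo] at hHolder
  calc ∫⁻ ζ in Ioo a b, ENNReal.ofReal (F ζ ^ q)
      = ((∫⁻ ζ in Ioo a b, ENNReal.ofReal (F ζ ^ q)) ^ (1 / q)) ^ q := by
        rw [← ENNReal.rpow_mul, one_div_mul_cancel hq.ne', ENNReal.rpow_one]
    _ ≤ ((ENNReal.ofReal ((b - a) ^ (1 - p / 2))) ^ (1 / p)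
          * ENNReal.ofReal (b - a) ^ (1 / q - 1 / p)) ^ q := by
        gcongr
        exact hHolder.trans (by gcongr; exact h a b hab)
    _ = ENNReal.ofReal ((b - a) ^ (1 - q / 2)) := by
        rw [ENNReal.ofReal_rpow_of_nonneg (by positivity) (by positivity),
          ENNReal.ofReal_rpow_of_nonneg hL.le (sub_nonneg.2 (one_div_le_one_div_of_le hq hqp)),
          ← ENNReal.ofReal_mul (by positivity),
          ENNReal.ofReal_rpow_of_nonneg (by positivity) hq.le, ← Real.rpow_mul hL.le,
          ← Real.rpow_add hL, ← Real.rpow_mul hL.le]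
        congr 2
        field_simp
        ring

theorem intervalMassBound_zero (F : ℝ → ℝ) : IntervalMassBound F 0 := by
  intro a b _
  simp [Real.volume_Ioo]

theorem lintegral_mul_dist_rpow_le_tsum {α : Type*} [MetricSpace α] [MeasurableSpace α]
    [OpensMeasurableSpace α] {μ : Measure α} (g : α → ℝ≥0∞) {x : α} (hx : μ {x} = 0)
    {t R : ℝ} (ht : t ≤ 0) (hR : 0 < R) :
    ∫⁻ y, g y * ENNReal.ofReal (dist x y ^ t) ∂μ ≤
      ∑' j : ℤ,
        ENNReal.ofReal ((R * 2 ^ j) ^ t) * ∫⁻ y in ball x (R * 2 ^ (j + 1)), g y ∂μ := by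
  set annulus : ℤ → Set α := fun j ↦ ball x (R * 2 ^ (j + 1)) \ ball x (R * 2 ^ j)
  have hcover : (⋃ j, annulus j) =ᵐ[μ] univ := by
    refine ae_eq_univ.2 (measure_mono_null (fun y hy ↦ ?_) hx)
    by_contra hyx
    have hd : 0 < dist y x / R := div_pos (dist_pos.2 hyx) hR
    obtain ⟨j, hj⟩ := exists_mem_Ico_zpow hd one_lt_two
    refine hy (mem_iUnion.2 ⟨j, ?_, ?_⟩)
    · rw [mem_ball, ← div_lt_iff₀' hR]; exact hj.2
    · rw [mem_ball, not_lt, ← le_div_iff₀' hR]; exact hj.1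
  calc ∫⁻ y, g y * ENNReal.ofReal (dist x y ^ t) ∂μ
      = ∫⁻ y in ⋃ j, annulus j, g y * ENNReal.ofReal (dist x y ^ t) ∂μ := by
        rw [setLIntegral_congr hcover, setLIntegral_univ]
    _ ≤ ∑' j, ∫⁻ y in annulus j, g y * ENNReal.ofReal (dist x y ^ t) ∂μ :=
        lintegral_iUnion_le _ _
    _ ≤ ∑' j : ℤ,
          ENNReal.ofReal ((R * 2 ^ j) ^ t) * ∫⁻ y in ball x (R * 2 ^ (j + 1)), g y ∂μ := by
        gcongr with j
        calc ∫⁻ y in annulus j, g y * ENNReal.ofReal (dist x y ^ t) ∂μ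
            ≤ ∫⁻ y in annulus j, ENNReal.ofReal ((R * 2 ^ j) ^ t) * g y ∂μ := by
              refine setLIntegral_mono' (measurableSet_ball.diff measurableSet_ball)
                fun y hy ↦ ?_
              rw [mul_comm, dist_comm]
              gcongr ?_ * _
              exact ENNReal.ofReal_le_ofReal
                (Real.rpow_le_rpow_of_nonpos (by positivity) (not_lt.1 hy.2) ht)
          _ = ENNReal.ofReal ((R * 2 ^ j) ^ t) * ∫⁻ y in annulus j, g y ∂μ :=
              lintegral_const_mul' _ _ ENNReal.ofReal_ne_top
          _ ≤ _ := by gcongr; exact sdiff_subset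

theorem tsum_int_le_of_le_zpow {f : ℤ → ℝ≥0∞} {c d r s : ℝ} (hc : 0 ≤ c) (hd : 0 ≤ d)
    (hr : 1 < r) (hs₀ : 0 ≤ s) (hs₁ : s < 1)
    (hlow : ∀ j, f j ≤ ENNReal.ofReal (c * r ^ j))
    (hhigh : ∀ j, f j ≤ ENNReal.ofReal (d * s ^ j)) :
    ∑' j, f j ≤ ENNReal.ofReal (c / (r - 1) + d / (1 - s)) := by
  have hr₀ : 0 < r := one_pos.trans hr
  have hr' : r⁻¹ < 1 := inv_lt_one_of_one_lt₀ hr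
  rw [tsum_of_nat_of_neg_add_one ENNReal.summable ENNReal.summable, add_comm,
    ENNReal.ofReal_add (div_nonneg hc (sub_pos.2 hr).le) (div_nonneg hd (sub_pos.2 hs₁).le)]
  gcongr
  · calc ∑' n : ℕ, f (-(n + 1)) ≤ ∑' n : ℕ, ENNReal.ofReal (c * r⁻¹ * r⁻¹ ^ n) :=
          ENNReal.tsum_le_tsum fun n ↦ (hlow _).trans_eq <| by
            rw [zpow_neg, zpow_add_one₀ hr₀.ne', zpow_natCast, mul_inv, inv_pow]; ring_nf
      _ = ENNReal.ofReal (c / (r - 1)) := by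
        rw [← ENNReal.ofReal_tsum_of_nonneg (fun n ↦ by positivity)
            ((summable_geometric_of_lt_one (by positivity) hr').mul_left _),
          tsum_mul_left, tsum_geometric_of_lt_one (by positivity) hr']
        congr 1
        field_simp
  · calc ∑' n : ℕ, f n ≤ ∑' n : ℕ, ENNReal.ofReal (d * s ^ n) :=
          ENNReal.tsum_le_tsum fun n ↦ (hhigh n).trans_eq (by rw [zpow_natCast])
      _ = ENNReal.ofReal (d / (1 - s)) := by
        rw [← ENNReal.ofReal_tsum_of_nonneg (fun n ↦ by positivity)
            ((summable_geometric_of_lt_one hs₀ hs₁).mul_left _),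
          tsum_mul_left, tsum_geometric_of_lt_one hs₀ hs₁, div_eq_mul_inv]

theorem Real.rpow_le_rpow_sub_mul_rpow {x A q s : ℝ} (hx : 0 ≤ x) (hxA : x ≤ A)
    (hqs : q ≤ s) (hs : s ≠ 0) : x ^ s ≤ A ^ (s - q) * x ^ q := by
  calc x ^ s = x ^ (s - q) * x ^ q := by
        rw [← Real.rpow_add' hx (by simpa using hs), sub_add_cancel]
    _ ≤ A ^ (s - q) * x ^ q := by gcongr

theorem setLIntegral_Ioo_inter_sublevel_le {F : ℝ → ℝ} (hF : Measurable F)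
    (hF0 : ∀ ζ, 0 ≤ F ζ) {A q s : ℝ} (hA : 0 ≤ A) (hqs : q ≤ s) (hs : s ≠ 0)
    (hmass : IntervalMassBound F q) {a b : ℝ} (hab : a < b) :
    ∫⁻ ζ in Ioo a b ∩ {ζ | F ζ ≤ A}, ENNReal.ofReal (F ζ ^ s) ≤
      ENNReal.ofReal (A ^ (s - q) * (b - a) ^ (1 - q / 2)) := by
  calc ∫⁻ ζ in Ioo a b ∩ {ζ | F ζ ≤ A}, ENNReal.ofReal (F ζ ^ s)
      ≤ ∫⁻ ζ in Ioo a b ∩ {ζ | F ζ ≤ A},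
          ENNReal.ofReal (A ^ (s - q)) * ENNReal.ofReal (F ζ ^ q) := by
        refine setLIntegral_mono (by fun_prop) fun ζ hζ ↦ ?_
        rw [← ENNReal.ofReal_mul (by positivity)]
        exact ENNReal.ofReal_le_ofReal (Real.rpow_le_rpow_sub_mul_rpow (hF0 ζ) hζ.2 hqs hs)
    _ ≤ ENNReal.ofReal (A ^ (s - q)) * ∫⁻ ζ in Ioo a b, ENNReal.ofReal (F ζ ^ q) := by
        rw [lintegral_const_mul' _ _ ENNReal.ofReal_ne_top]
        gcongr
        exact inter_subset_left
    _ ≤ ENNReal.ofReal (A ^ (s - q) * (b - a) ^ (1 - q / 2)) := by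
        rw [ENNReal.ofReal_mul (by positivity)]
        gcongr
        exact hmass a b hab

theorem Real.rpow_mul_zpow_rpow {x y : ℝ} (hx : 0 ≤ x) (hy : 0 ≤ y) (a e : ℝ) (j : ℤ) :
    (x ^ a * y ^ j) ^ e = x ^ (a * e) * (y ^ e) ^ j := by
  rw [Real.mul_rpow (by positivity) (by positivity), ← Real.rpow_mul hx, ← Real.rpow_intCast,
    ← Real.rpow_intCast, ← Real.rpow_mul hy, ← Real.rpow_mul hy, mul_comm e]

theorem ofReal_rpow_mul_setLIntegral_ball_le {F : ℝ → ℝ} (hF : Measurable F)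
    (hF0 : ∀ ζ, 0 ≤ F ζ) {q A : ℝ} (hq : q ≤ 3 / 2) (hmass : IntervalMassBound F q)
    (hA : 0 < A) (x : ℝ) (j : ℤ) :
    ENNReal.ofReal ((A ^ (-2 : ℝ) * 2 ^ j) ^ (-(1 : ℝ) / 2)) *
        ∫⁻ y in ball x (A ^ (-2 : ℝ) * 2 ^ (j + 1)), ENNReal.ofReal (F y ^ ((3 : ℝ) / 2))
          ∂volume.restrict {y | F y ≤ A} ≤
      ENNReal.ofReal (4 ^ (1 - q / 2) * A ^ ((1 : ℝ) / 2) * ((2 : ℝ) ^ ((1 - q) / 2)) ^ j) := by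
  set ρ := A ^ (-2 : ℝ) * 2 ^ j with hρ_def
  have hρ : 0 < ρ := by positivity
  rw [Measure.restrict_restrict measurableSet_ball, Real.ball_eq_Ioo, zpow_add_one₀ two_ne_zero,
    ← mul_assoc, ← hρ_def]
  calc _ ≤ ENNReal.ofReal (ρ ^ (-(1 : ℝ) / 2)) *
        ENNReal.ofReal (A ^ ((3 : ℝ) / 2 - q) * (x + ρ * 2 - (x - ρ * 2)) ^ (1 - q / 2)) := by
        gcongr
        exact setLIntegral_Ioo_inter_sublevel_le hF hF0 hA.le hq (by norm_num) hmass
          (by linarith)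
    _ = ENNReal.ofReal
          (ρ ^ (-(1 : ℝ) / 2) * (A ^ ((3 : ℝ) / 2 - q) * (4 * ρ) ^ (1 - q / 2))) := by
        rw [← ENNReal.ofReal_mul (by positivity)]; ring_nf
    _ = _ := by
        congr 1
        calc _ = 4 ^ (1 - q / 2) * A ^ ((3 : ℝ) / 2 - q) *
              ρ ^ (-(1 : ℝ) / 2 + (1 - q / 2)) := by
              rw [Real.mul_rpow (by norm_num) hρ.le, Real.rpow_add hρ]; ring
          _ = _ := by
              rw [hρ_def, Real.rpow_mul_zpow_rpow hA.le zero_le_two, mul_assoc,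
                ← mul_assoc (A ^ _), ← Real.rpow_add hA]
              ring_nf

noncomputable def dyadicConst (q : ℝ) : ℝ :=
  4 / (2 ^ ((1 : ℝ) / 2) - 1) + 4 ^ (1 - q / 2) / (1 - 2 ^ ((1 - q) / 2))

theorem dyadicConst_pos {q : ℝ} (hq : 1 < q) : 0 < dyadicConst q := by
  have h₁ : 1 < (2 : ℝ) ^ ((1 : ℝ) / 2) := Real.one_lt_rpow one_lt_two (by norm_num)
  have h₂ : (2 : ℝ) ^ ((1 - q) / 2) < 1 :=
    Real.rpow_lt_one_of_one_lt_of_neg one_lt_two (by linarith)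
  unfold dyadicConst
  have := sub_pos.2 h₁
  have := sub_pos.2 h₂
  positivity

theorem setLIntegral_sublevel_rpow_mul_kernel_le {F : ℝ → ℝ} (hF : Measurable F)
    (hF0 : ∀ ζ, 0 ≤ F ζ) {q : ℝ} (hq₁ : 1 < q) (hq : q ≤ 3 / 2)
    (hmass : IntervalMassBound F q) (x : ℝ) {A : ℝ} (hA : 0 < A) :
    ∫⁻ y in {y | F y ≤ A},
        ENNReal.ofReal (F y ^ ((3 : ℝ) / 2)) * ENNReal.ofReal (|x - y| ^ (-(1 : ℝ) / 2)) ≤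
      ENNReal.ofReal (dyadicConst q * A ^ ((1 : ℝ) / 2)) := by
  simp_rw [← Real.dist_eq]
  -- on the annuli of radius below `A⁻²` the crude bound `F ≤ A` is the case `q = 0`
  refine (lintegral_mul_dist_rpow_le_tsum _ (measure_singleton x) (by norm_num)
    (Real.rpow_pos_of_pos hA (-2))).trans ?_
  refine (tsum_int_le_of_le_zpow (by positivity) (by positivity)
    (Real.one_lt_rpow one_lt_two (by norm_num)) (by positivity)
    (Real.rpow_lt_one_of_one_lt_of_neg one_lt_two (by linarith))
    (ofReal_rpow_mul_setLIntegral_ball_le hF hF0 (by norm_num) (intervalMassBound_zero F) hA x)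
    (ofReal_rpow_mul_setLIntegral_ball_le hF hF0 hq hmass hA x)).trans_eq ?_
  congr 1
  simp only [dyadicConst]
  norm_num
  ring

theorem setLIntegral_sublevel_selfconvolution_le {F : ℝ → ℝ} (hF : Measurable F)
    (hF0 : ∀ ζ, 0 ≤ F ζ) {q : ℝ} (hq₁ : 1 < q) (hq : q ≤ 3 / 2)
    (hmass : IntervalMassBound F q) (x : ℝ) :
    ∫⁻ y in {y | F y ≤ F x}, ENNReal.ofReal
        (F x ^ ((3 : ℝ) / 2) * F y ^ ((3 : ℝ) / 2) * |x - y| ^ (-(1 : ℝ) / 2)) ≤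
      ENNReal.ofReal (dyadicConst q * F x ^ 2) := by
  rcases (hF0 x).eq_or_lt with hx | hx
  · simp [← hx]
  calc _ = ENNReal.ofReal (F x ^ ((3 : ℝ) / 2)) * ∫⁻ y in {y | F y ≤ F x},
        ENNReal.ofReal (F y ^ ((3 : ℝ) / 2)) * ENNReal.ofReal (|x - y| ^ (-(1 : ℝ) / 2)) := by
        rw [← lintegral_const_mul' _ _ ENNReal.ofReal_ne_top]
        refine lintegral_congr fun y ↦ ?_
        rw [mul_assoc, ENNReal.ofReal_mul (Real.rpow_nonneg (hF0 x) _),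
          ENNReal.ofReal_mul (Real.rpow_nonneg (hF0 y) _)]
    _ ≤ ENNReal.ofReal (F x ^ ((3 : ℝ) / 2)) *
        ENNReal.ofReal (dyadicConst q * F x ^ ((1 : ℝ) / 2)) := by
        gcongr
        exact setLIntegral_sublevel_rpow_mul_kernel_le hF hF0 hq₁ hq hmass x hx
    _ = ENNReal.ofReal (dyadicConst q * F x ^ 2) := by
        rw [← ENNReal.ofReal_mul (Real.rpow_nonneg hx.le _), mul_left_comm, ← Real.rpow_add hx]
        norm_num

theorem lintegral_prod_le_two_mul_lintegral_sublevel {α : Type*} [MeasurableSpace α]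
    {μ : Measure α} [SFinite μ] {f : α × α → ℝ≥0∞} (hf : Measurable f)
    (hf_swap : ∀ z, f z.swap = f z) {F : α → ℝ} (hF : Measurable F) :
    ∫⁻ z, f z ∂μ.prod μ ≤
      2 * ∫⁻ x, ∫⁻ y in {y | F y ≤ F x}, f (x, y) ∂μ ∂μ := by
  set T := {z : α × α | F z.2 ≤ F z.1}
  have hT : MeasurableSet T :=
    measurableSet_le (hF.comp measurable_snd) (hF.comp measurable_fst)
  have hTf : Measurable (T.indicator f) := hf.indicator hT
  calc ∫⁻ z, f z ∂μ.prod μ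
      ≤ ∫⁻ z, T.indicator f z + T.indicator f z.swap ∂μ.prod μ := by
        refine lintegral_mono fun z ↦ ?_
        rcases le_total (F z.2) (F z.1) with h | h
        · rw [indicator_of_mem (show z ∈ T from h)]; exact le_self_add
        · rw [indicator_of_mem (show z.swap ∈ T from h), hf_swap]; exact le_add_self
    _ = 2 * ∫⁻ z, T.indicator f z ∂μ.prod μ := by
        rw [lintegral_add_left hTf, lintegral_prod_swap (T.indicator f), two_mul]
    _ = 2 * ∫⁻ x, ∫⁻ y in {y | F y ≤ F x}, f (x, y) ∂μ ∂μ := by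
        rw [lintegral_prod _ hTf.aemeasurable]
        congr 1
        refine lintegral_congr fun x ↦ ?_
        rw [← lintegral_indicator (measurableSet_le hF measurable_const)]
        rfl

/-- The key weighted self-convolution bound behind the refined Airy Strichartz inequality. -/
theorem weighted_selfconvolution_bound (p : ℝ) (hp : 1 < p) :
    ∃ C : ℝ, 0 < C ∧ ∀ F : ℝ → ℝ, Measurable F → (∀ ζ : ℝ, 0 ≤ F ζ) →
      (∀ a b : ℝ, a < b →
        ∫⁻ ζ in Set.Ioo a b, ENNReal.ofReal (F ζ ^ p) ≤
          ENNReal.ofReal ((b - a) ^ (1 - p/2))) →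
      ∫⁻ q : ℝ × ℝ,
          ENNReal.ofReal (F q.1 ^ ((3 : ℝ)/2) * F q.2 ^ ((3 : ℝ)/2) *
            |q.1 - q.2| ^ (-(1 : ℝ)/2)) ≤
        ENNReal.ofReal C * ∫⁻ ζ : ℝ, ENNReal.ofReal (F ζ ^ 2) := by
  set q := min p (3 / 2)
  have hq₁ : 1 < q := lt_min hp (by norm_num)
  have hD := dyadicConst_pos hq₁
  refine ⟨2 * dyadicConst q, by positivity, fun F hF hF0 hmass ↦ ?_⟩
  have hmass_q : IntervalMassBound F q :=
    IntervalMassBound.of_le hF hF0 (by linarith) (min_le_left _ _) hmass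
  rw [Measure.volume_eq_prod]
  calc _ ≤ 2 * ∫⁻ x, ∫⁻ y in {y | F y ≤ F x}, ENNReal.ofReal
          (F x ^ ((3 : ℝ) / 2) * F y ^ ((3 : ℝ) / 2) * |x - y| ^ (-(1 : ℝ) / 2)) :=
        lintegral_prod_le_two_mul_lintegral_sublevel (by fun_prop)
          (fun z ↦ by rw [Prod.fst_swap, Prod.snd_swap, abs_sub_comm, mul_comm (F z.2 ^ _)]) hF
    _ ≤ 2 * ∫⁻ x, ENNReal.ofReal (dyadicConst q * F x ^ 2) := by
        gcongr with x
        exact setLIntegral_sublevel_selfconvolution_le hF hF0 hq₁ (min_le_right _ _) hmass_q x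
    _ = ENNReal.ofReal (2 * dyadicConst q) * ∫⁻ ζ, ENNReal.ofReal (F ζ ^ 2) := by
        simp_rw [ENNReal.ofReal_mul hD.le]
        rw [lintegral_const_mul' _ _ ENNReal.ofReal_ne_top, ENNReal.ofReal_mul zero_le_two,
          ENNReal.ofReal_ofNat, mul_assoc]
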